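/- Let G=(V,E) be a finite directed graph with initial vertex v_init ∈ V, and let M_G be the MDP constructed from (G, v_init) as in the Hamiltonian-path reduction. Then for every ε with 0 ≤ ε < 1/2^{|V|+1}: G has a Hamiltonian path starting at v_init if and only if there exist memoryless deterministic schedulers σ₁, σ₂ of M_G with |Pr^{σ₁}_{s₀}(◇{s_a}) − Pr^{σ₂}_{s₀}(◇{s_b})| ≤ ε. -/

import Mathlib

open scoped BigOperators Classical
open Filter

/-- A finite history: an initial state together with a list of (action, next-state) steps. -/
abbrev Hist (S A : Type*) : Type _ := S × List (A × S)

/-- The last state of a history. -/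
def Hist.last {S A : Type*} (π : Hist S A) : S :=
  (π.2.getLast?).elim π.1 Prod.snd

/-- A Markov decision process with finite state space `S` and finite action space `A`:
`P s a s'` is the transition probability, each state has at least one enabled action
(an action whose outgoing probabilities sum to `1`), and the outgoing probabilities
of a non-enabled action sum to `0`. -/
structure MDP (S A : Type*) [Fintype S] [Fintype A] where
  P : S → A → S → ℝ
  nonneg : ∀ s a s', 0 ≤ P s a s'
  le_one : ∀ s a s', P s a s' ≤ 1
  sum_cases : ∀ s a, (∑ s', P s a s') = 1 ∨ (∑ s', P s a s') = 0
  exists_enabled : ∀ s, ∃ a, (∑ s', P s a s') = 1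

namespace MDP

variable {S A : Type*} [Fintype S] [Fintype A]

/-- Action `a` is enabled in state `s`. -/
def enabled (M : MDP S A) (s : S) (a : A) : Prop := (∑ s', M.P s a s') = 1

/-- A state is absorbing if every enabled action loops on it with probability 1. -/
def Absorbing (M : MDP S A) (s : S) : Prop := ∀ a, M.enabled s a → M.P s a s = 1

end MDP

/-- A (history-dependent, randomized) scheduler for `M`: it assigns to every finite
history a probability distribution over the actions enabled at its last state. -/
structure Scheduler {S A : Type*} [Fintype S] [Fintype A] (M : MDP S A) where
  choice : Hist S A → A → ℝ
  nonneg : ∀ π a, 0 ≤ choice π a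
  sum_one : ∀ π, (∑ a, choice π a) = 1
  supp : ∀ π a, ¬ M.enabled (Hist.last π) a → choice π a = 0

namespace Scheduler

variable {S A : Type*} [Fintype S] [Fintype A] {M : MDP S A}

/-- A scheduler is memoryless if its choice only depends on the last state of the history. -/
def Memoryless (σ : Scheduler M) : Prop :=
  ∀ π π' : Hist S A, Hist.last π = Hist.last π' → σ.choice π = σ.choice π'

/-- A scheduler is deterministic if all its choice probabilities are 0 or 1. -/
def Deterministic (σ : Scheduler M) : Prop :=
  ∀ π a, σ.choice π a = 0 ∨ σ.choice π a = 1

/-- Memoryless deterministic (MD) schedulers. -/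
def MD (σ : Scheduler M) : Prop := σ.Memoryless ∧ σ.Deterministic

end Scheduler

/-- Probability of reaching the target set `T` within `n` steps, starting from history `π`,
under scheduler `σ`. -/
noncomputable def reachN {S A : Type*} [Fintype S] [Fintype A] (M : MDP S A)
    (σ : Scheduler M) (T : Set S) : ℕ → Hist S A → ℝ
  | 0, π => if Hist.last π ∈ T then 1 else 0
  | n + 1, π =>
      if Hist.last π ∈ T then 1
      else ∑ a, σ.choice π a * ∑ s', M.P (Hist.last π) a s' *
        reachN M σ T n (π.1, π.2 ++ [(a, s')])

/-- `Pr M σ s T` is the probability of eventually reaching `T` from state `s` under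
scheduler `σ`: the supremum of the step-bounded reachability probabilities. -/
noncomputable def Pr {S A : Type*} [Fintype S] [Fintype A] (M : MDP S A)
    (σ : Scheduler M) (s : S) (T : Set S) : ℝ :=
  ⨆ n : ℕ, reachN M σ T n (s, [])

/-- States of the Hamiltonian-path reduction MDP: the vertices `V`, the chain states
`s₀, s₁, …, s_{|V|−1}` (encoded as `Fin (card V)`), and the three extra states
`s_⊥, s_a, s_b` (encoded as `Fin 3`: `0 = s_⊥`, `1 = s_a`, `2 = s_b`). -/
abbrev HSt (V : Type*) [Fintype V] : Type _ := V ⊕ (Fin (Fintype.card V) ⊕ Fin 3)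

/-- Actions of the Hamiltonian-path reduction MDP: `none` is `τ` and `some (v, v')`
is the action associated with the edge `(v, v')`. -/
abbrev HAct (V : Type*) : Type _ := Option (V × V)

/-- The initial state `s₀` (the first chain state). -/
def hs0 (V : Type*) [Fintype V] [Nonempty V] : HSt V :=
  Sum.inr (Sum.inl ⟨0, Fintype.card_pos⟩)

/-- The absorbing state `s_⊥`. -/
def hsBot (V : Type*) [Fintype V] : HSt V := Sum.inr (Sum.inr 0)

/-- The absorbing state `s_a`. -/
def hsA (V : Type*) [Fintype V] : HSt V := Sum.inr (Sum.inr 1)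

/-- The absorbing state `s_b`. -/
def hsB (V : Type*) [Fintype V] : HSt V := Sum.inr (Sum.inr 2)

/-- The transition function of the Hamiltonian-path reduction MDP for a directed graph
`(V, E)` with initial vertex `vinit`:
`P(s₀,τ,vinit) = P(s₀,τ,s₁) = 1/2`; `P(sᵢ,τ,s_{i+1}) = P(sᵢ,τ,s_⊥) = 1/2` for
`1 ≤ i ≤ |V|−2`; `P(s_{|V|−1},τ,s_b) = P(s_{|V|−1},τ,s_⊥) = 1/2`; for `(v,v') ∈ E`,
`P(v,(v,v'),v') = P(v,(v,v'),s_⊥) = 1/2`; `P(v,τ,s_a) = 1`; `s_⊥, s_a, s_b` absorbing. -/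
noncomputable def hamP {V : Type*} [Fintype V] [DecidableEq V]
    (E : Set (V × V)) (vinit : V) : HSt V → HAct V → HSt V → ℝ := fun x act y =>
  match x, act with
  | Sum.inl v, none => if y = hsA V then 1 else 0
  | Sum.inl v, some (u, u') =>
      if u = v ∧ (u, u') ∈ E then
        (if y = Sum.inl u' then (1 : ℝ) / 2 else 0) +
          (if y = hsBot V then (1 : ℝ) / 2 else 0)
      else 0
  | Sum.inr (Sum.inl i), none =>
      (if y = (if (i : ℕ) = 0 then Sum.inl vinit else hsBot V) then (1 : ℝ) / 2 else 0) +
        (if h : (i : ℕ) + 1 < Fintype.card V then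
            (if y = Sum.inr (Sum.inl ⟨(i : ℕ) + 1, h⟩) then (1 : ℝ) / 2 else 0)
          else (if y = hsB V then (1 : ℝ) / 2 else 0))
  | Sum.inr (Sum.inl _), some _ => 0
  | Sum.inr (Sum.inr e), none => if y = Sum.inr (Sum.inr e) then 1 else 0
  | Sum.inr (Sum.inr _), some _ => 0

/-- `l` is a Hamiltonian path of the graph `(V, E)` starting at `vinit`: it lists every
vertex exactly once, starts at `vinit`, and follows edges of `E`. -/
def IsHamPath {V : Type*} [Fintype V] (E : Set (V × V)) (vinit : V) (l : List V) : Prop :=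
  l.Nodup ∧ l.length = Fintype.card V ∧ l.head? = some vinit ∧
    l.Chain' (fun u u' => (u, u') ∈ E)


/-!
Whatever the scheduler, the chain `s₀ s₁ … s_{|V|-1}` admits only `τ`, so `s_b` is reached
with probability exactly `2^{-|V|}`. A memoryless deterministic scheduler follows a
deterministic walk `v_init = w₀, w₁, …` through the graph, each edge step surviving with
probability `1/2`: if `τ` is first played at `w_k`, then `s_a` is reached with probability
`2^{-(k+1)}`, and otherwise never. Since `ε < 2^{-(|V|+1)}` separates `2^{-|V|}` from all
other such values, approximate equality forces `k = |V| - 1`; and a deterministic walk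
that stops at `w_k` cannot revisit a vertex before, so `w₀ … w_k` is a Hamiltonian path.
Conversely, the scheduler following a Hamiltonian path and playing `τ` at its end
reaches `s_a` with probability `2^{-|V|}`.
-/

@[simp]
lemma Hist.last_nil {S A : Type*} (s : S) : Hist.last ((s, []) : Hist S A) = s := rfl

@[simp]
lemma Hist.last_snoc {S A : Type*} (π : Hist S A) (a : A) (s : S) :
    Hist.last ((π.1, π.2 ++ [(a, s)]) : Hist S A) = s := by
  simp [Hist.last]

section Reachability

variable {S A : Type*} [Fintype S] [Fintype A] {M : MDP S A} {σ : Scheduler M} {T : Set S}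

namespace Scheduler

lemma choice_eq_zero_of_choice_eq_one {π : Hist S A} {a b : A} (ha : σ.choice π a = 1)
    (hb : b ≠ a) : σ.choice π b = 0 := by
  have hpair : σ.choice π a + σ.choice π b ≤ 1 := by
    rw [← σ.sum_one π, ← Finset.sum_pair hb.symm]
    exact Finset.sum_le_sum_of_subset_of_nonneg (Finset.subset_univ _)
      fun c _ _ => σ.nonneg π c
  linarith [σ.nonneg π b]

lemma enabled_of_choice_ne_zero {π : Hist S A} {a : A} (h : σ.choice π a ≠ 0) :
    M.enabled (Hist.last π) a :=
  not_not.1 fun hna => h (σ.supp π a hna)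

lemma choice_eq_one_of_unique_enabled {π : Hist S A} {a : A}
    (h : ∀ b, M.enabled (Hist.last π) b → b = a) : σ.choice π a = 1 := by
  rw [← σ.sum_one π, Finset.sum_eq_single a (fun b _ hb => by_contra fun hne =>
    hb (h b (enabled_of_choice_ne_zero hne))) (by simp)]

lemma MD.exists_choice_eq_one (hσ : σ.MD) :
    ∃ g : S → A, ∀ π, σ.choice π (g (Hist.last π)) = 1 := by
  have hdet : ∀ π, ∃ a, σ.choice π a = 1 := fun π => by
    by_contra! h
    have := σ.sum_one π
    simp [fun a => (hσ.2 π a).resolve_right (h a)] at this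
  choose g hg using fun s : S => hdet (s, [])
  exact ⟨g, fun π => by rw [hσ.1 π (Hist.last π, []) rfl]; exact hg _⟩

noncomputable def ofFun (g : S → A) (hg : ∀ s, M.enabled s (g s)) : Scheduler M where
  choice π a := if a = g (Hist.last π) then 1 else 0
  nonneg π a := by split <;> norm_num
  sum_one π := by simp
  supp π a hna := if_neg <| by rintro rfl; exact hna (hg _)

lemma ofFun_choice_self (g : S → A) (hg : ∀ s, M.enabled s (g s)) (π : Hist S A) :
    (ofFun g hg).choice π (g (Hist.last π)) = 1 :=
  if_pos rfl

lemma MD_ofFun (g : S → A) (hg : ∀ s, M.enabled s (g s)) : (ofFun g hg).MD := by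
  refine ⟨fun π π' h => ?_, fun π a => ?_⟩
  · funext a
    simp only [ofFun, h]
  · simp only [ofFun]
    split <;> simp

end Scheduler

lemma reachN_of_mem {π : Hist S A} (h : Hist.last π ∈ T) (m : ℕ) : reachN M σ T m π = 1 := by
  cases m <;> simp [reachN, h]

lemma reachN_succ_of_choice_eq_one {π : Hist S A} {a : A} (ha : σ.choice π a = 1)
    (hT : Hist.last π ∉ T) (m : ℕ) :
    reachN M σ T (m + 1) π =
      ∑ s', M.P (Hist.last π) a s' * reachN M σ T m (π.1, π.2 ++ [(a, s')]) := by
  rw [reachN, if_neg hT, Finset.sum_eq_single a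
    (fun b _ hb => by rw [Scheduler.choice_eq_zero_of_choice_eq_one ha hb, zero_mul])
    (by simp), ha, one_mul]

lemma reachN_eq_zero_of_closed (C : Set S) (hCT : Disjoint C T)
    (hC : ∀ s ∈ C, ∀ a s', M.P s a s' ≠ 0 → s' ∈ C) (m : ℕ) {π : Hist S A}
    (hπ : Hist.last π ∈ C) : reachN M σ T m π = 0 := by
  induction m generalizing π with
  | zero => simp [reachN, hCT.notMem_of_mem_left hπ]
  | succ m ih =>
    rw [reachN, if_neg (hCT.notMem_of_mem_left hπ)]
    refine Finset.sum_eq_zero fun a _ => mul_eq_zero_of_right _ <|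
      Finset.sum_eq_zero fun s' _ => ?_
    by_cases hP : M.P (Hist.last π) a s' = 0
    · rw [hP, zero_mul]
    · rw [ih (by simpa using hC _ hπ a s' hP), mul_zero]

lemma Pr_eq_of_forall_le_of_eq {s : S} {c : ℝ} (hle : ∀ m, reachN M σ T m (s, []) ≤ c)
    {m : ℕ} (hm : reachN M σ T m (s, []) = c) : Pr M σ s T = c :=
  le_antisymm (ciSup_le hle) (hm ▸ le_ciSup ⟨c, Set.forall_mem_range.2 hle⟩ m)

section Deterministic

variable {g : S → A} (hg : ∀ π, σ.choice π (g (Hist.last π)) = 1)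
include hg

lemma enabled_of_forall_choice_eq_one (s : S) : M.enabled s (g s) :=
  Scheduler.enabled_of_choice_ne_zero (σ := σ) (π := (s, [])) ((hg _).trans_ne one_ne_zero)

lemma reachN_congr_of_choice {π π' : Hist S A} (h : Hist.last π = Hist.last π') (m : ℕ) :
    reachN M σ T m π = reachN M σ T m π' := by
  induction m generalizing π π' with
  | zero => simp only [reachN, h]
  | succ m ih =>
    by_cases hT : Hist.last π ∈ T
    · rw [reachN_of_mem hT, reachN_of_mem (h ▸ hT)]
    · rw [reachN_succ_of_choice_eq_one (hg π) hT, reachN_succ_of_choice_eq_one (hg π') (h ▸ hT),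
        h]
      exact Finset.sum_congr rfl fun s' _ => by
        rw [ih (π' := (π'.1, π'.2 ++ [(g (Hist.last π'), s')])) (by simp)]

lemma reachN_succ_nil_of_choice {s : S} (hs : s ∉ T) (m : ℕ) :
    reachN M σ T (m + 1) (s, []) = ∑ s', M.P s (g s) s' * reachN M σ T m (s', []) := by
  rw [reachN_succ_of_choice_eq_one (hg _) hs]
  exact Finset.sum_congr rfl fun s' _ => by
    rw [Hist.last_nil, reachN_congr_of_choice hg (π' := (s', [])) (Hist.last_snoc (s, []) (g s) s')]

end Deterministic

end Reachability

lemma Function.injOn_iterate_Iic_of_first_hit {α : Type*} (f : α → α) (p : α → Prop) {x : α}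
    {k : ℕ} (hk : p (f^[k] x)) (hlt : ∀ i < k, ¬ p (f^[i] x)) :
    Set.InjOn (fun i => f^[i] x) (Set.Iic k) := by
  intro i hi j hj hij
  by_contra hne
  wlog hij' : i < j generalizing i j
  · exact this hj hi hij.symm (Ne.symm hne) (by omega)
  -- both orbits hit `p` after `k - j` further steps, the first one before time `k`
  refine hlt (i + (k - j)) (by simp only [Set.mem_Iic] at hj; omega) ?_
  have hkj : k = (k - j) + j := by simp only [Set.mem_Iic] at hj; omega
  rwa [Nat.add_comm, Function.iterate_add_apply, show f^[i] x = f^[j] x from hij,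
    ← Function.iterate_add_apply, ← hkj]

lemma eq_of_abs_half_pow_sub_half_pow_lt {a n : ℕ}
    (h : |(1 / 2 : ℝ) ^ a - (1 / 2) ^ n| < (1 / 2) ^ (n + 1)) : a = n := by
  rw [abs_lt] at h
  rcases lt_trichotomy a n with han | rfl | han
  · have h1 : (1 / 2 : ℝ) ^ (n - 1) ≤ (1 / 2) ^ a :=
      pow_le_pow_of_le_one (by norm_num) (by norm_num) (by omega)
    have h2 : (1 / 2 : ℝ) ^ n = (1 / 2) ^ (n - 1) * (1 / 2) := by
      rw [← pow_succ, Nat.sub_add_cancel (by omega)]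
    rw [pow_succ, h2] at h
    linarith [h.2, pow_pos (by norm_num : (0 : ℝ) < 1 / 2) (n - 1)]
  · rfl
  · have : (1 / 2 : ℝ) ^ a ≤ (1 / 2) ^ (n + 1) :=
      pow_le_pow_of_le_one (by norm_num) (by norm_num) han
    rw [pow_succ] at h this
    linarith [h.1]

lemma isHamPath_map_range {V : Type*} [Fintype V] {E : Set (V × V)} {vinit : V} (w : ℕ → V)
    (h0 : w 0 = vinit) (hinj : Set.InjOn w (Set.Iio (Fintype.card V)))
    (hE : ∀ i, i + 1 < Fintype.card V → (w i, w (i + 1)) ∈ E) :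
    IsHamPath E vinit ((List.range (Fintype.card V)).map w) := by
  have hpos : 0 < Fintype.card V := Fintype.card_pos_iff.2 ⟨vinit⟩
  refine ⟨List.Nodup.map_on (fun x hx y hy => hinj (by simpa using hx) (by simpa using hy))
    List.nodup_range, by simp, ?_, List.isChain_iff_getElem.2 fun i hi => ?_⟩
  · rw [List.head?_map, List.head?_range, if_neg hpos.ne', Option.map_some, h0]
  · simpa using hE i (by simpa using hi)

section ReductionStates

variable {V : Type*} [Fintype V]

def chainNext (i : Fin (Fintype.card V)) : HSt V :=
  if h : (i : ℕ) + 1 < Fintype.card V then Sum.inr (Sum.inl ⟨i + 1, h⟩) else hsB V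

def chainExit (vinit : V) (i : Fin (Fintype.card V)) : HSt V :=
  if (i : ℕ) = 0 then Sum.inl vinit else hsBot V

def trapB (V : Type*) [Fintype V] : Set (HSt V) :=
  {s | s = hsBot V ∨ s = hsA V ∨ ∃ v, s = Sum.inl v}

def trapA (V : Type*) [Fintype V] : Set (HSt V) :=
  {s | s = hsBot V ∨ s = hsB V ∨ ∃ i : Fin (Fintype.card V), (i : ℕ) ≠ 0 ∧ s = Sum.inr (Sum.inl i)}

lemma chainNext_mem_trapA (i : Fin (Fintype.card V)) : chainNext i ∈ trapA V := by
  unfold chainNext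
  split_ifs with h
  · exact Or.inr (Or.inr ⟨_, Nat.succ_ne_zero _, rfl⟩)
  · exact Or.inr (Or.inl rfl)

-- Where `g` plays `τ` the walk has stopped, so the successor chosen there is irrelevant.
def walkStep (g : HSt V → HAct V) (v : V) : V := ((g (Sum.inl v)).map Prod.snd).getD v

def pathPolicy [DecidableEq V] (l : List V) : HSt V → HAct V
  | Sum.inl v => l[l.idxOf v + 1]?.map (v, ·)
  | _ => none

end ReductionStates

section HamiltonianMDP

variable {V : Type*} [Fintype V] [DecidableEq V] {E : Set (V × V)} {vinit : V}

lemma sum_hamP_inl_none_mul (v : V) (f : HSt V → ℝ) :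
    ∑ y, hamP E vinit (Sum.inl v) none y * f y = f (hsA V) := by
  simp [hamP]

lemma sum_hamP_inl_some_mul {v v' : V} (hE : (v, v') ∈ E) (f : HSt V → ℝ) :
    ∑ y, hamP E vinit (Sum.inl v) (some (v, v')) y * f y =
      1 / 2 * f (Sum.inl v') + 1 / 2 * f (hsBot V) := by
  simp [hamP, hE, add_mul, Finset.sum_add_distrib]

lemma sum_hamP_chain_mul (i : Fin (Fintype.card V)) (f : HSt V → ℝ) :
    ∑ y, hamP E vinit (Sum.inr (Sum.inl i)) none y * f y =
      1 / 2 * f (chainExit vinit i) + 1 / 2 * f (chainNext i) := by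
  by_cases h : (i : ℕ) + 1 < Fintype.card V <;>
    simp [hamP, chainExit, chainNext, h, add_mul, Finset.sum_add_distrib]

lemma hamP_absorbing_ne_zero {e : Fin 3} {a : HAct V} {y : HSt V}
    (h : hamP E vinit (Sum.inr (Sum.inr e)) a y ≠ 0) : y = Sum.inr (Sum.inr e) := by
  cases a <;> simp_all [hamP]

lemma hamP_inl_ne_zero {v : V} {a : HAct V} {y : HSt V} (h : hamP E vinit (Sum.inl v) a y ≠ 0) :
    y = hsBot V ∨ y = hsA V ∨ ∃ v', y = Sum.inl v' := by
  rcases a with _ | ⟨u, u'⟩ <;> simp only [hamP] at h <;> split_ifs at h <;> simp_all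

lemma hamP_chain_ne_zero {i : Fin (Fintype.card V)} {a : HAct V} {y : HSt V}
    (h : hamP E vinit (Sum.inr (Sum.inl i)) a y ≠ 0) : y = chainExit vinit i ∨ y = chainNext i := by
  rcases a with _ | _
  · by_cases hi : (i : ℕ) + 1 < Fintype.card V <;>
      simp only [hamP, chainExit, chainNext, hi, dite_true, dite_false] at h ⊢ <;>
      split_ifs at h <;> simp_all
  · simp [hamP] at h

variable {M : MDP (HSt V) (HAct V)}

section Enabled

variable (hM : M.P = hamP E vinit)
include hM

lemma enabled_none (s : HSt V) : M.enabled s none := by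
  unfold MDP.enabled
  rcases s with v | i | e
  · simpa [hM] using sum_hamP_inl_none_mul (E := E) (vinit := vinit) v 1
  · have h := sum_hamP_chain_mul (E := E) (vinit := vinit) i fun _ => 1
    norm_num at h
    simpa [hM] using h
  · simp [hM, hamP]

lemma not_enabled_chain_some (i : Fin (Fintype.card V)) (p : V × V) :
    ¬ M.enabled (Sum.inr (Sum.inl i)) (some p) := by
  simp [MDP.enabled, hM, hamP]

lemma enabled_inl_some_iff {v u u' : V} :
    M.enabled (Sum.inl v) (some (u, u')) ↔ u = v ∧ (u, u') ∈ E := by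
  refine ⟨fun h => by_contra fun hne => ?_, fun ⟨huv, hE⟩ => ?_⟩
  · simp [MDP.enabled, hM, hamP, hne] at h
  · subst huv
    unfold MDP.enabled
    have h := sum_hamP_inl_some_mul (vinit := vinit) hE fun _ => 1
    norm_num at h
    simpa [hM] using h

end Enabled

section Chain

variable (hM : M.P = hamP E vinit) (σ : Scheduler M)
include hM

lemma reachN_hsB_eq_zero_of_mem_trapB {π : Hist (HSt V) (HAct V)} (hπ : Hist.last π ∈ trapB V)
    (m : ℕ) : reachN M σ {hsB V} m π = 0 := by
  refine reachN_eq_zero_of_closed (trapB V) ?_ ?_ m hπ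
  · simp [trapB, hsBot, hsA, hsB]
  · rintro s (rfl | rfl | ⟨v, rfl⟩) a y hy <;> rw [hM] at hy
    · exact Or.inl (hamP_absorbing_ne_zero hy)
    · exact Or.inr (Or.inl (hamP_absorbing_ne_zero hy))
    · exact hamP_inl_ne_zero hy

lemma reachN_hsA_eq_zero_of_mem_trapA {π : Hist (HSt V) (HAct V)} (hπ : Hist.last π ∈ trapA V)
    (m : ℕ) : reachN M σ {hsA V} m π = 0 := by
  refine reachN_eq_zero_of_closed (trapA V) ?_ ?_ m hπ
  · simp [trapA, hsBot, hsA, hsB]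
  · rintro s (rfl | rfl | ⟨i, hi, rfl⟩) a y hy <;> rw [hM] at hy
    · exact Or.inl (hamP_absorbing_ne_zero hy)
    · exact Or.inr (Or.inl (hamP_absorbing_ne_zero hy))
    · rcases hamP_chain_ne_zero hy with rfl | rfl
      · simp [chainExit, hi, trapA]
      · exact chainNext_mem_trapA i

lemma reachN_succ_of_last_chain {T : Set (HSt V)} {π : Hist (HSt V) (HAct V)}
    {i : Fin (Fintype.card V)} (h : Hist.last π = Sum.inr (Sum.inl i))
    (hT : Sum.inr (Sum.inl i) ∉ T) (m : ℕ) :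
    reachN M σ T (m + 1) π =
      1 / 2 * reachN M σ T m (π.1, π.2 ++ [(none, chainExit vinit i)]) +
        1 / 2 * reachN M σ T m (π.1, π.2 ++ [(none, chainNext i)]) := by
  have hτ : σ.choice π none = 1 := Scheduler.choice_eq_one_of_unique_enabled fun b hb => by
    rcases b with _ | p
    · rfl
    · exact absurd (h ▸ hb) (not_enabled_chain_some hM i p)
  rw [reachN_succ_of_choice_eq_one hτ (h ▸ hT), h, hM, sum_hamP_chain_mul]

lemma reachN_hsB_of_last_chain (m : ℕ) {i : Fin (Fintype.card V)} {π : Hist (HSt V) (HAct V)}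
    (h : Hist.last π = Sum.inr (Sum.inl i)) :
    reachN M σ {hsB V} m π =
      if Fintype.card V - i ≤ m then (1 / 2) ^ (Fintype.card V - i) else 0 := by
  have hi := i.isLt
  induction m generalizing i π with
  | zero => simp [reachN, h, hsB]; omega
  | succ m ih =>
    rw [reachN_succ_of_last_chain hM σ h (by simp [hsB]),
      reachN_hsB_eq_zero_of_mem_trapB hM σ (by
        rw [Hist.last_snoc]; unfold chainExit; split_ifs <;> simp [trapB]),
      mul_zero, zero_add]
    unfold chainNext
    split_ifs with hnext hle
    · rw [ih (Hist.last_snoc _ _ _) hnext]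
      simp only
      rw [if_pos (by omega), show Fintype.card V - i = Fintype.card V - (i + 1) + 1 by omega,
        pow_succ]
      ring
    · rw [ih (Hist.last_snoc _ _ _) hnext]
      simp only
      rw [if_neg (by omega), mul_zero]
    · rw [reachN_of_mem (by simp), show Fintype.card V - i = 1 by omega]
      norm_num
    · omega

theorem Pr_hsB [Nonempty V] : Pr M σ (hs0 V) {hsB V} = (1 / 2) ^ Fintype.card V := by
  have hB (m : ℕ) := reachN_hsB_of_last_chain hM σ m (π := (hs0 V, [])) rfl
  simp only [Nat.sub_zero] at hB
  refine Pr_eq_of_forall_le_of_eq (fun m => ?_) (m := Fintype.card V) (by simp [hB])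
  rw [hB]
  split_ifs
  · exact le_rfl
  · positivity

end Chain

section Walk

variable (hM : M.P = hamP E vinit) {σ : Scheduler M} {g : HSt V → HAct V}
include hM

lemma eq_some_walkStep_of_ne_none (hgE : ∀ s, M.enabled s (g s)) {v : V}
    (h : g (Sum.inl v) ≠ none) :
    g (Sum.inl v) = some (v, walkStep g v) ∧ (v, walkStep g v) ∈ E := by
  obtain ⟨⟨u, u'⟩, hu⟩ := Option.ne_none_iff_exists'.1 h
  have hen := hgE (Sum.inl v)
  rw [hu] at hen
  obtain ⟨rfl, hE⟩ := (enabled_inl_some_iff hM).1 hen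
  simp [walkStep, hu, hE]

lemma exists_isHamPath_of_walkStep_stop (hgE : ∀ s, M.enabled s (g s))
    {k : ℕ} (hk : g (Sum.inl ((walkStep g)^[k] vinit)) = none)
    (hlt : ∀ i < k, g (Sum.inl ((walkStep g)^[i] vinit)) ≠ none) (hkn : k + 1 = Fintype.card V) :
    ∃ l, IsHamPath E vinit l := by
  refine ⟨_, isHamPath_map_range (fun i => (walkStep g)^[i] vinit) rfl ?_ fun i hi => ?_⟩
  · refine (Function.injOn_iterate_Iic_of_first_hit _ (fun v => g (Sum.inl v) = none) hk hlt).mono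
      fun i hi => ?_
    simp only [Set.mem_Iio, Set.mem_Iic] at hi ⊢
    omega
  · rw [Function.iterate_succ_apply']
    exact (eq_some_walkStep_of_ne_none hM hgE (hlt i (by omega))).2

variable (hg : ∀ π, σ.choice π (g (Hist.last π)) = 1)
include hg

lemma reachN_hsA_inl_of_eq_none {v : V} (h : g (Sum.inl v) = none) (m : ℕ) :
    reachN M σ {hsA V} (m + 1) (Sum.inl v, []) = 1 := by
  rw [reachN_succ_nil_of_choice hg (by simp [hsA]) m, h, hM, sum_hamP_inl_none_mul]
  exact reachN_of_mem (σ := σ) (π := (hsA V, [])) (Set.mem_singleton _) m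

lemma reachN_hsA_inl_of_ne_none {v : V} (h : g (Sum.inl v) ≠ none) (m : ℕ) :
    reachN M σ {hsA V} (m + 1) (Sum.inl v, []) =
      1 / 2 * reachN M σ {hsA V} m (Sum.inl (walkStep g v), []) := by
  obtain ⟨hgv, hE⟩ := eq_some_walkStep_of_ne_none hM (enabled_of_forall_choice_eq_one hg) h
  rw [reachN_succ_nil_of_choice hg (by simp [hsA]) m, hgv, hM, sum_hamP_inl_some_mul hE,
    reachN_hsA_eq_zero_of_mem_trapA hM σ (π := (hsBot V, [])) (Or.inl rfl), mul_zero,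
    add_zero]

lemma reachN_hsA_hs0 [Nonempty V] (m : ℕ) :
    reachN M σ {hsA V} (m + 1) (hs0 V, []) =
      1 / 2 * reachN M σ {hsA V} m (Sum.inl vinit, []) := by
  rw [reachN_succ_of_last_chain hM σ rfl (by simp [hsA]),
    reachN_hsA_eq_zero_of_mem_trapA hM σ (π := (_, _ ++ [(none, chainNext _)]))
      ((Hist.last_snoc _ _ _).symm ▸ chainNext_mem_trapA _), mul_zero, add_zero]
  exact congrArg _ (reachN_congr_of_choice hg (Hist.last_snoc (hs0 V, []) none (Sum.inl vinit)) m)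

lemma reachN_hsA_iterate_walkStep {v : V} {k : ℕ}
    (hk : g (Sum.inl ((walkStep g)^[k] v)) = none)
    (hlt : ∀ i < k, g (Sum.inl ((walkStep g)^[i] v)) ≠ none) (m : ℕ) {i : ℕ} (hi : i ≤ k) :
    reachN M σ {hsA V} m (Sum.inl ((walkStep g)^[i] v), []) =
      if k - i < m then (1 / 2) ^ (k - i) else 0 := by
  induction m generalizing i with
  | zero => simp [reachN, hsA]
  | succ m ih =>
    rcases hi.eq_or_lt with rfl | hik
    · simp [reachN_hsA_inl_of_eq_none hM hg hk]
    · rw [reachN_hsA_inl_of_ne_none hM hg (hlt i hik), ← Function.iterate_succ_apply' (walkStep g),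
        ih hik]
      split_ifs <;> try omega
      · rw [show k - i = k - (i + 1) + 1 by omega, pow_succ, mul_comm]
      · rw [mul_zero]

lemma reachN_hsA_iterate_walkStep_eq_zero {v : V}
    (h : ∀ i, g (Sum.inl ((walkStep g)^[i] v)) ≠ none) (m i : ℕ) :
    reachN M σ {hsA V} m (Sum.inl ((walkStep g)^[i] v), []) = 0 := by
  induction m generalizing i with
  | zero => simp [reachN, hsA]
  | succ m ih =>
    rw [reachN_hsA_inl_of_ne_none hM hg (h i), ← Function.iterate_succ_apply' (walkStep g), ih,
      mul_zero]

variable [Nonempty V]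

theorem Pr_hsA_of_walkStep_stop {k : ℕ} (hk : g (Sum.inl ((walkStep g)^[k] vinit)) = none)
    (hlt : ∀ i < k, g (Sum.inl ((walkStep g)^[i] vinit)) ≠ none) :
    Pr M σ (hs0 V) {hsA V} = (1 / 2) ^ (k + 1) := by
  have hv (m : ℕ) := reachN_hsA_iterate_walkStep hM hg hk hlt m (Nat.zero_le k)
  simp only [Function.iterate_zero, id, Nat.sub_zero] at hv
  refine Pr_eq_of_forall_le_of_eq (fun m => ?_) (m := k + 2) ?_
  · rcases m with _ | m
    · rw [reachN, if_neg (by simp [hs0, hsA])]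
      positivity
    · rw [reachN_hsA_hs0 hM hg, hv, pow_succ']
      split_ifs
      · exact le_rfl
      · rw [mul_zero]
        positivity
  · rw [reachN_hsA_hs0 hM hg, hv, if_pos (by omega), pow_succ']

theorem Pr_hsA_of_walkStep_no_stop (h : ∀ i, g (Sum.inl ((walkStep g)^[i] vinit)) ≠ none) :
    Pr M σ (hs0 V) {hsA V} = 0 := by
  refine Pr_eq_of_forall_le_of_eq (fun m => ?_) (m := 0) (by simp [reachN, hs0, hsA])
  rcases m with _ | m
  · simp [reachN, hs0, hsA]
  · have hv := reachN_hsA_iterate_walkStep_eq_zero hM hg h m 0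
    rw [Function.iterate_zero, id] at hv
    rw [reachN_hsA_hs0 hM hg, hv, mul_zero]

end Walk

section PathPolicy

variable {l : List V}

lemma enabled_pathPolicy (hM : M.P = hamP E vinit)
    (hl : l.IsChain fun u u' => (u, u') ∈ E) (s : HSt V) : M.enabled s (pathPolicy l s) := by
  rcases s with v | s
  · simp only [pathPolicy]
    cases h : l[l.idxOf v + 1]? with
    | none => exact enabled_none hM _
    | some v' =>
      obtain ⟨hlt, rfl⟩ := List.getElem?_eq_some_iff.1 h
      refine (enabled_inl_some_iff hM).2 ⟨rfl, ?_⟩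
      have := List.isChain_iff_getElem.1 hl _ hlt
      rwa [List.getElem_idxOf] at this
  · exact enabled_none hM _

lemma pathPolicy_getElem_eq_none_iff (hnd : l.Nodup) {i : ℕ} (hi : i < l.length) :
    pathPolicy l (Sum.inl l[i]) = none ↔ l.length ≤ i + 1 := by
  simp [pathPolicy, hnd.idxOf_getElem]

lemma iterate_walkStep_pathPolicy (hnd : l.Nodup) (hhead : l.head? = some vinit) {i : ℕ}
    (hi : i < l.length) : (walkStep (pathPolicy l))^[i] vinit = l[i] := by
  induction i with
  | zero =>
    rw [List.head?_eq_getElem?, List.getElem?_eq_getElem hi, Option.some_inj] at hhead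
    exact hhead.symm
  | succ i ih =>
    rw [Function.iterate_succ_apply', ih (by omega)]
    simp [walkStep, pathPolicy, hnd.idxOf_getElem, hi]

theorem exists_MD_Pr_hsA_eq_of_isHamPath [Nonempty V] (hM : M.P = hamP E vinit)
    (hl : IsHamPath E vinit l) :
    ∃ σ : Scheduler M, σ.MD ∧ Pr M σ (hs0 V) {hsA V} = (1 / 2) ^ Fintype.card V := by
  obtain ⟨hnd, hlen, hhead, hchain⟩ := hl
  have hpos : 0 < Fintype.card V := Fintype.card_pos
  refine ⟨_, Scheduler.MD_ofFun _ (enabled_pathPolicy hM hchain), ?_⟩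
  rw [Pr_hsA_of_walkStep_stop hM (Scheduler.ofFun_choice_self _ _) (k := l.length - 1), hlen,
    Nat.sub_add_cancel hpos]
  · rw [iterate_walkStep_pathPolicy hnd hhead (by omega), pathPolicy_getElem_eq_none_iff hnd]
    omega
  · intro i hi
    rw [iterate_walkStep_pathPolicy hnd hhead (by omega), Ne, pathPolicy_getElem_eq_none_iff hnd]
    omega

end PathPolicy

end HamiltonianMDP

/-- For every `0 ≤ ε < 1/2^{|V|+1}`: `G` has a Hamiltonian path starting
at `vinit` iff there are two memoryless deterministic schedulers `σ₁, σ₂` of the reduction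
MDP with `|Pr^{σ₁}_{s₀}(◇{s_a}) − Pr^{σ₂}_{s₀}(◇{s_b})| ≤ ε`. -/
theorem hamiltonian_iff_two_MD_approx_equal
    {V : Type*} [Fintype V] [DecidableEq V] [Nonempty V]
    (E : Set (V × V)) (vinit : V)
    (M : MDP (HSt V) (HAct V)) (hM : M.P = hamP E vinit)
    (ε : ℝ) (hε0 : 0 ≤ ε) (hε : ε < 1 / 2 ^ (Fintype.card V + 1)) :
    (∃ l : List V, IsHamPath E vinit l) ↔
      ∃ σ₁ σ₂ : Scheduler M, σ₁.MD ∧ σ₂.MD ∧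
        |Pr M σ₁ (hs0 V) ({hsA V} : Set (HSt V)) -
          Pr M σ₂ (hs0 V) ({hsB V} : Set (HSt V))| ≤ ε := by
  rw [← one_div_pow] at hε
  constructor
  · rintro ⟨l, hl⟩
    obtain ⟨σ, hσ, hA⟩ := exists_MD_Pr_hsA_eq_of_isHamPath hM hl
    exact ⟨σ, σ, hσ, hσ, by rwa [hA, Pr_hsB hM, sub_self, abs_zero]⟩
  · rintro ⟨σ₁, σ₂, hσ₁, -, hdiff⟩
    obtain ⟨g, hg⟩ := hσ₁.exists_choice_eq_one
    rw [Pr_hsB hM] at hdiff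
    by_cases hstop : ∃ k, g (Sum.inl ((walkStep g)^[k] vinit)) = none
    · have hlt (i : ℕ) (hi : i < Nat.find hstop) := Nat.find_min hstop hi
      rw [Pr_hsA_of_walkStep_stop hM hg (Nat.find_spec hstop) hlt] at hdiff
      exact exists_isHamPath_of_walkStep_stop hM (enabled_of_forall_choice_eq_one hg)
        (Nat.find_spec hstop) hlt (eq_of_abs_half_pow_sub_half_pow_lt (hdiff.trans_lt hε))
    · rw [Pr_hsA_of_walkStep_no_stop hM hg (not_exists.1 hstop), zero_sub, abs_neg,
        abs_of_pos (by positivity)] at hdiff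
      exact absurd (hdiff.trans_lt hε)
        (not_lt.2 (pow_le_pow_of_le_one (by norm_num) (by norm_num) (Nat.le_succ _)))
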